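/- Let a generalized hyperbolic triangle be determined by radii (r_i, r_j, r_k) and nonnegative inversive distances, with edge lengths cosh l_ij = cosh r_i cosh r_j + I_ij sinh r_i sinh r_j etc. and extended angles θ̃ via Λ of the law-of-cosines ratio. Then lim_{(r_i,r_j,r_k)→(0,b,c)} θ̃_i = π - Λ(I_jk) for any b, c ∈ (0, +∞], and lim_{(r_i,r_j,r_k)→(0,0,c)} θ̃_k = 0. -/

import Mathlib

/-!
`Lambda` is `arccos`, which Mathlib already clamps to `[0, π]`. Dividing the numerator and the
denominator of the law-of-cosines ratio by `sinh r_j * sinh r_k` (for `θ̃_i`), resp. by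
`sinh r_k ^ 2` (for `θ̃_k`), turns it into a function of `r_i`, `r_j` and of `coth r_j`, `coth r_k`
that is continuous at `r_i = 0`, resp. `r_i = r_j = 0`; and `coth` has a finite limit as a radius
tends to `b ∈ (0, +∞]` (namely `1` at `+∞`). At the limit point the ratio equals `-I_jk`,
resp. `1`, so `θ̃_i → arccos (-I_jk) = π - Λ(I_jk)` and `θ̃_k → arccos 1 = 0`.
-/

open Real Set Filter

noncomputable def Lambda (x : ℝ) : ℝ :=
  if x ≤ -1 then π else if x ≤ 1 then arccos x else 0

noncomputable def arcoshLog (x : ℝ) : ℝ := Real.log (x + Real.sqrt (x ^ 2 - 1))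

/-- Hyperbolic edge length of two circles of radii `r, s` with inversive distance `I`. -/
noncomputable def hlen (r s I : ℝ) : ℝ :=
  arcoshLog (Real.cosh r * Real.cosh s + I * Real.sinh r * Real.sinh s)

/-- Extended inner angle at the vertex of radius `ri` in the generalized hyperbolic
triangle of radii `(ri, rj, rk)` and inversive distances `Iij, Ijk, Iik`. -/
noncomputable def thetaTildeI (ri rj rk Iij Ijk Iik : ℝ) : ℝ :=
  Lambda ((Real.cosh (hlen ri rj Iij) * Real.cosh (hlen ri rk Iik)
      - Real.cosh (hlen rj rk Ijk)) /
    (Real.sinh (hlen ri rj Iij) * Real.sinh (hlen ri rk Iik)))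

open scoped Topology

lemma Lambda_eq_arccos : Lambda = arccos := by
  funext x
  unfold Lambda
  split_ifs with h₁ h₂
  · exact (arccos_of_le_neg_one h₁).symm
  · rfl
  · exact (arccos_of_one_le (le_of_not_ge h₂)).symm

lemma hlen_comm (r s I : ℝ) : hlen r s I = hlen s r I := by
  simp only [hlen, mul_comm (cosh r), mul_right_comm I (sinh r)]

lemma one_le_cosh_mul_cosh_add {r s I : ℝ} (hr : 0 ≤ r) (hs : 0 ≤ s) (hI : 0 ≤ I) :
    1 ≤ cosh r * cosh s + I * sinh r * sinh s := by
  have hsinh : 0 ≤ I * sinh r * sinh s :=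
    mul_nonneg (mul_nonneg hI (sinh_nonneg_iff.2 hr)) (sinh_nonneg_iff.2 hs)
  nlinarith [one_le_cosh r, one_le_cosh s]

lemma cosh_hlen {r s I : ℝ} (hr : 0 ≤ r) (hs : 0 ≤ s) (hI : 0 ≤ I) :
    cosh (hlen r s I) = cosh r * cosh s + I * sinh r * sinh s :=
  cosh_arcosh (one_le_cosh_mul_cosh_add hr hs hI)

lemma sinh_hlen {r s I : ℝ} (hr : 0 ≤ r) (hs : 0 ≤ s) (hI : 0 ≤ I) :
    sinh (hlen r s I) = √((cosh r * cosh s + I * sinh r * sinh s) ^ 2 - 1) :=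
  sinh_arcosh (one_le_cosh_mul_cosh_add hr hs hI)

noncomputable def coth (x : ℝ) : ℝ := cosh x / sinh x

lemma tendsto_coth_atTop : Tendsto coth atTop (𝓝 1) := by
  have hsinh : Tendsto sinh atTop atTop := by
    refine Tendsto.congr (fun x => (sinh_eq x).symm) ?_
    simp only [sub_eq_add_neg]
    exact (tendsto_exp_atTop.atTop_add tendsto_exp_neg_atTop_nhds_zero.neg).atTop_div_const
      two_pos
  have hcoth : ∀ᶠ x in atTop, 1 + exp (-x) * (sinh x)⁻¹ = coth x := by
    filter_upwards [eventually_gt_atTop 0] with x hx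
    rw [coth, ← cosh_sub_sinh]
    field_simp [(sinh_pos_iff.2 hx).ne']
    ring
  have hlim := tendsto_const_nhds (x := (1 : ℝ)).add
    (tendsto_exp_neg_atTop_nhds_zero.mul (tendsto_inv_atTop_zero.comp hsinh))
  rw [mul_zero, add_zero] at hlim
  exact hlim.congr' hcoth

lemma exists_tendsto_coth {l : Filter ℝ} (hl : l = atTop ∨ ∃ b : ℝ, 0 < b ∧ l = 𝓝 b) :
    ∃ u, Tendsto coth l (𝓝 u) ∧ ∀ᶠ r in l, 0 < r := by
  rcases hl with rfl | ⟨b, hb, rfl⟩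
  · exact ⟨1, tendsto_coth_atTop, eventually_gt_atTop 0⟩
  · exact ⟨coth b, continuous_cosh.continuousAt.div continuous_sinh.continuousAt
      (sinh_pos_iff.2 hb).ne', eventually_gt_nhds hb⟩

/- With `u = coth s`, these are `cosh (hlen r s I) / sinh s` and `sinh (hlen r s I) / sinh s`;
unlike `hlen r s I` itself they stay finite as `s → ∞`. -/
noncomputable def scaledCoshLen (r u I : ℝ) : ℝ := cosh r * u + I * sinh r

noncomputable def scaledSinhLen (r u I : ℝ) : ℝ := √(scaledCoshLen r u I ^ 2 - u ^ 2 + 1)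

@[simp]
lemma scaledCoshLen_zero (u I : ℝ) : scaledCoshLen 0 u I = u := by simp [scaledCoshLen]

@[simp]
lemma scaledSinhLen_zero (u I : ℝ) : scaledSinhLen 0 u I = 1 := by simp [scaledSinhLen]

lemma cosh_hlen_eq_sinh_mul {r s I : ℝ} (hr : 0 ≤ r) (hs : 0 < s) (hI : 0 ≤ I) :
    cosh (hlen r s I) = sinh s * scaledCoshLen r (coth s) I := by
  rw [cosh_hlen hr hs.le hI, scaledCoshLen, coth]
  field_simp [(sinh_pos_iff.2 hs).ne']

lemma sinh_hlen_eq_sinh_mul {r s I : ℝ} (hr : 0 ≤ r) (hs : 0 < s) (hI : 0 ≤ I) :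
    sinh (hlen r s I) = sinh s * scaledSinhLen r (coth s) I := by
  have hsinh : 0 < sinh s := sinh_pos_iff.2 hs
  have hsq : scaledCoshLen r (coth s) I ^ 2 - coth s ^ 2 + 1
      = (sinh s)⁻¹ ^ 2 * ((cosh r * cosh s + I * sinh r * sinh s) ^ 2 - 1) := by
    rw [← cosh_hlen hr hs.le hI, cosh_hlen_eq_sinh_mul hr hs hI, coth]
    field_simp
    linear_combination (-1 : ℝ) * cosh_sq s
  rw [sinh_hlen hr hs.le hI, scaledSinhLen, hsq, sqrt_mul (sq_nonneg _), sqrt_sq (by positivity),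
    mul_inv_cancel_left₀ hsinh.ne']

lemma cosine_ratio_rescale {s t a b c d e : ℝ} (hs : s ≠ 0) (ht : t ≠ 0) :
    (s * a * (t * b) - s * t * c) / (s * d * (t * e)) = (a * b - c) / (d * e) := by
  rw [← mul_div_mul_left (a * b - c) (d * e) (mul_ne_zero hs ht)]
  ring_nf

lemma thetaTildeI_eq_arccos_coth {ri rj rk Iij Ijk Iik : ℝ} (hri : 0 ≤ ri) (hrj : 0 < rj)
    (hrk : 0 < rk) (hIij : 0 ≤ Iij) (hIjk : 0 ≤ Ijk) (hIik : 0 ≤ Iik) :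
    thetaTildeI ri rj rk Iij Ijk Iik =
      arccos ((scaledCoshLen ri (coth rj) Iij * scaledCoshLen ri (coth rk) Iik
          - (coth rj * coth rk + Ijk)) /
        (scaledSinhLen ri (coth rj) Iij * scaledSinhLen ri (coth rk) Iik)) := by
  have hjk : cosh (hlen rj rk Ijk) = sinh rj * sinh rk * (coth rj * coth rk + Ijk) := by
    rw [cosh_hlen hrj.le hrk.le hIjk, coth, coth]
    field_simp [(sinh_pos_iff.2 hrj).ne', (sinh_pos_iff.2 hrk).ne']
  rw [thetaTildeI, Lambda_eq_arccos, cosh_hlen_eq_sinh_mul hri hrj hIij,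
    cosh_hlen_eq_sinh_mul hri hrk hIik, sinh_hlen_eq_sinh_mul hri hrj hIij,
    sinh_hlen_eq_sinh_mul hri hrk hIik, hjk,
    cosine_ratio_rescale (sinh_pos_iff.2 hrj).ne' (sinh_pos_iff.2 hrk).ne']

lemma thetaTildeI_eq_arccos_coth_self {ri rj rk Iij Ijk Iik : ℝ} (hri : 0 ≤ ri) (hrj : 0 ≤ rj)
    (hrk : 0 < rk) (hIij : 0 ≤ Iij) (hIjk : 0 ≤ Ijk) (hIik : 0 ≤ Iik) :
    thetaTildeI rk ri rj Iik Iij Ijk =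
      arccos ((scaledCoshLen ri (coth rk) Iik * scaledCoshLen rj (coth rk) Ijk
          - (cosh ri * cosh rj + Iij * sinh ri * sinh rj) * (coth rk ^ 2 - 1)) /
        (scaledSinhLen ri (coth rk) Iik * scaledSinhLen rj (coth rk) Ijk)) := by
  have hsinh : sinh rk ≠ 0 := (sinh_pos_iff.2 hrk).ne'
  have hij : cosh (hlen ri rj Iij) =
      sinh rk * sinh rk * ((cosh ri * cosh rj + Iij * sinh ri * sinh rj) * (coth rk ^ 2 - 1)) := by
    rw [cosh_hlen hri hrj hIij, coth]
    field_simp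
    linear_combination (-1 : ℝ) * cosh_sq rk
  rw [thetaTildeI, Lambda_eq_arccos, hlen_comm rk ri, hlen_comm rk rj,
    cosh_hlen_eq_sinh_mul hri hrk hIik, cosh_hlen_eq_sinh_mul hrj hrk hIjk,
    sinh_hlen_eq_sinh_mul hri hrk hIik, sinh_hlen_eq_sinh_mul hrj hrk hIjk, hij,
    cosine_ratio_rescale hsinh hsinh]

lemma tendsto_thetaTildeI_shrinking_vertex {Iij Ijk Iik u v : ℝ} {la lb lc : Filter ℝ}
    (hIij : 0 ≤ Iij) (hIjk : 0 ≤ Ijk) (hIik : 0 ≤ Iik) (ha : la ≤ 𝓝[≥] 0)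
    (hu : Tendsto coth lb (𝓝 u)) (hv : Tendsto coth lc (𝓝 v))
    (hlb : ∀ᶠ r in lb, 0 < r) (hlc : ∀ᶠ r in lc, 0 < r) :
    Tendsto (fun p : ℝ × ℝ × ℝ => thetaTildeI p.1 p.2.1 p.2.2 Iij Ijk Iik)
      (la ×ˢ lb ×ˢ lc) (𝓝 (π - Lambda Ijk)) := by
  have hla : ∀ᶠ r in la, 0 ≤ r := ha self_mem_nhdsWithin
  have hlim : Tendsto (fun q : ℝ × ℝ × ℝ =>
      arccos ((scaledCoshLen q.1 q.2.1 Iij * scaledCoshLen q.1 q.2.2 Iik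
          - (q.2.1 * q.2.2 + Ijk)) /
        (scaledSinhLen q.1 q.2.1 Iij * scaledSinhLen q.1 q.2.2 Iik)))
      (𝓝 (0, u, v)) (𝓝 (π - Lambda Ijk)) := by
    convert ContinuousAt.tendsto ?_ using 2
    · simp [Lambda_eq_arccos, ← arccos_neg]
    · refine continuous_arccos.continuousAt.comp (ContinuousAt.div ?_ ?_ (by simp))
      · unfold scaledCoshLen; fun_prop
      · unfold scaledSinhLen scaledCoshLen; fun_prop
  have hcoth : Tendsto (fun p : ℝ × ℝ × ℝ => (p.1, coth p.2.1, coth p.2.2))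
      (la ×ˢ lb ×ˢ lc) (𝓝 (0, u, v)) := by
    rw [nhds_prod_eq, nhds_prod_eq]
    exact (tendsto_id.mono_left (ha.trans nhdsWithin_le_nhds)).prodMap (hu.prodMap hv)
  refine (hlim.comp hcoth).congr' ?_
  filter_upwards [prod_mem_prod hla (prod_mem_prod hlb hlc)] with p ⟨hri, hrj, hrk⟩
  exact (thetaTildeI_eq_arccos_coth hri hrj hrk hIij hIjk hIik).symm

lemma tendsto_thetaTildeI_shrinking_neighbours {Iij Ijk Iik w : ℝ} {la lb lc : Filter ℝ}
    (hIij : 0 ≤ Iij) (hIjk : 0 ≤ Ijk) (hIik : 0 ≤ Iik) (ha : la ≤ 𝓝[≥] 0) (hb : lb ≤ 𝓝[≥] 0)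
    (hw : Tendsto coth lc (𝓝 w)) (hlc : ∀ᶠ r in lc, 0 < r) :
    Tendsto (fun p : ℝ × ℝ × ℝ => thetaTildeI p.2.2 p.1 p.2.1 Iik Iij Ijk)
      (la ×ˢ lb ×ˢ lc) (𝓝 0) := by
  have hla : ∀ᶠ r in la, 0 ≤ r := ha self_mem_nhdsWithin
  have hlb : ∀ᶠ r in lb, 0 ≤ r := hb self_mem_nhdsWithin
  have hlim : Tendsto (fun q : ℝ × ℝ × ℝ =>
      arccos ((scaledCoshLen q.1 q.2.2 Iik * scaledCoshLen q.2.1 q.2.2 Ijk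
          - (cosh q.1 * cosh q.2.1 + Iij * sinh q.1 * sinh q.2.1) * (q.2.2 ^ 2 - 1)) /
        (scaledSinhLen q.1 q.2.2 Iik * scaledSinhLen q.2.1 q.2.2 Ijk)))
      (𝓝 (0, 0, w)) (𝓝 0) := by
    convert ContinuousAt.tendsto ?_ using 2
    · simp [← sq]
    · refine continuous_arccos.continuousAt.comp (ContinuousAt.div ?_ ?_ (by simp))
      · unfold scaledCoshLen; fun_prop
      · unfold scaledSinhLen scaledCoshLen; fun_prop
  have hcoth : Tendsto (fun p : ℝ × ℝ × ℝ => (p.1, p.2.1, coth p.2.2))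
      (la ×ˢ lb ×ˢ lc) (𝓝 (0, 0, w)) := by
    rw [nhds_prod_eq, nhds_prod_eq]
    exact (tendsto_id.mono_left (ha.trans nhdsWithin_le_nhds)).prodMap
      ((tendsto_id.mono_left (hb.trans nhdsWithin_le_nhds)).prodMap hw)
  refine (hlim.comp hcoth).congr' ?_
  filter_upwards [prod_mem_prod hla (prod_mem_prod hlb hlc)] with p ⟨hri, hrj, hrk⟩
  exact (thetaTildeI_eq_arccos_coth_self hri hrj hrk hIij hIjk hIik).symm

/-- A limit `b ∈ (0, +∞]` of a radius is encoded by a filter `lb` which is either `atTop` or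
`nhds b` for some finite `b > 0`. -/
theorem degenerate_angle_limits (Iij Ijk Iik : ℝ)
    (hIij : 0 ≤ Iij) (hIjk : 0 ≤ Ijk) (hIik : 0 ≤ Iik)
    (lb lc : Filter ℝ)
    (hlb : lb = atTop ∨ ∃ b : ℝ, 0 < b ∧ lb = nhds b)
    (hlc : lc = atTop ∨ ∃ c : ℝ, 0 < c ∧ lc = nhds c) :
    Tendsto (fun p : ℝ × ℝ × ℝ => thetaTildeI p.1 p.2.1 p.2.2 Iij Ijk Iik)
      ((nhdsWithin 0 (Ioi 0)) ×ˢ lb ×ˢ lc) (nhds (π - Lambda Ijk)) ∧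
    Tendsto (fun p : ℝ × ℝ × ℝ => thetaTildeI p.2.2 p.1 p.2.1 Iik Iij Ijk)
      ((nhdsWithin 0 (Ioi 0)) ×ˢ (nhdsWithin 0 (Ioi 0)) ×ˢ lc) (nhds 0) := by
  obtain ⟨u, hu, hlb_pos⟩ := exists_tendsto_coth hlb
  obtain ⟨v, hv, hlc_pos⟩ := exists_tendsto_coth hlc
  have hzero : 𝓝[>] (0 : ℝ) ≤ 𝓝[≥] 0 := nhdsWithin_mono 0 Ioi_subset_Ici_self
  exact ⟨tendsto_thetaTildeI_shrinking_vertex hIij hIjk hIik hzero hu hv hlb_pos hlc_pos,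
    tendsto_thetaTildeI_shrinking_neighbours hIij hIjk hIik hzero hzero hv hlc_pos⟩
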